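/- arXiv:2402.17284 — 2 statements merged into one kernel-verified Lean document; each statement's English description precedes it below -/
import Mathlib

section
/- Let Q be a unital quantale with unit e whose underlying lattice is meet-continuous, i.e. for every α ∈ Q and every nonempty directed set D ⊆ Q one has α ⊓ sSup D = ⨆ d ∈ D, (α ⊓ d). Assume Q is unitally nondistributive, i.e. e ≤ sSup {β | β ◁ e} and there exists A ⊆ Q with e ⊓ sSup A ≰ ⨆ a ∈ A, (e ⊓ a). Then there exist α, β ∈ Q such that e ⊓ (α ⊔ β) ≰ (e ⊓ α) ⊔ (e ⊓ β) and e ≰ α ⊔ β; in particular the underlying lattice of Q is strictly nondistributive. -/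
/-!
If `e` is the join of the elements totally below it, then `e ⊓ -` distributes over every join
that lies above `e`: each `β ◁ e` sits below `e ⊓ a` for some joinand `a`. On the other hand,
meet-continuity reduces distributivity of `e ⊓ -` over arbitrary joins to binary joins, by writing
a join as the directed join of its finite subjoins. So some binary join `α ⊔ β` fails
distributivity at `e`, and by the first observation it cannot lie above `e`.
-/

section CompleteLattice

variable {L : Type*} [CompleteLattice L]

/-- `TotallyBelow b a` is `b ◁ a`. -/
def TotallyBelow (b a : L) : Prop :=
  ∀ A : Set L, a ≤ sSup A → ∃ c ∈ A, b ≤ c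

theorem TotallyBelow.le {a b : L} (h : TotallyBelow b a) : b ≤ a := by
  obtain ⟨c, rfl, hbc⟩ := h {a} (by simp)
  exact hbc

theorem le_iSup_inf_of_le_sSup {a : L} (ha : a ≤ sSup {b | TotallyBelow b a}) {A : Set L}
    (hA : a ≤ sSup A) : a ≤ ⨆ c ∈ A, a ⊓ c := by
  refine ha.trans (sSup_le fun b hb => ?_)
  obtain ⟨c, hc, hbc⟩ := hb A hA
  exact le_biSup (a ⊓ ·) hc |>.trans' (le_inf hb.le hbc)

theorem inf_sup_le_of_le_sup {a : L} (ha : a ≤ sSup {b | TotallyBelow b a}) {x y : L}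
    (hxy : a ≤ x ⊔ y) : a ⊓ (x ⊔ y) ≤ a ⊓ x ⊔ a ⊓ y := by
  have := le_iSup_inf_of_le_sSup ha (A := {x, y}) (by rwa [sSup_pair])
  rw [iSup_pair] at this
  exact inf_le_left.trans this

theorem inf_finset_sup_le {a : L} (h : ∀ x y : L, a ⊓ (x ⊔ y) ≤ a ⊓ x ⊔ a ⊓ y)
    {ι : Type*} (s : Finset ι) (f : ι → L) : a ⊓ s.sup f ≤ s.sup (a ⊓ f ·) := by
  classical
  induction s using Finset.induction_on with
  | empty => simp
  | insert i s _ ih =>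
    rw [Finset.sup_insert, Finset.sup_insert]
    exact (h _ _).trans (sup_le_sup_left ih _)

theorem inf_sSup_le_iSup_inf {a : L}
    (hcont : ∀ D : Set L, D.Nonempty → DirectedOn (· ≤ ·) D → a ⊓ sSup D = ⨆ d ∈ D, a ⊓ d)
    (h : ∀ x y : L, a ⊓ (x ⊔ y) ≤ a ⊓ x ⊔ a ⊓ y) (A : Set L) :
    a ⊓ sSup A ≤ ⨆ c ∈ A, a ⊓ c := by
  set finiteSup : Finset A → L := fun t => t.sup Subtype.val
  have hdir : DirectedOn (· ≤ ·) (Set.range finiteSup) :=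
    directedOn_range.mpr (Monotone.directed_le fun _ _ hst => Finset.sup_mono hst)
  have hsSup : sSup A = sSup (Set.range finiteSup) := by
    rw [sSup_eq_iSup', sSup_range, iSup_eq_iSup_finset]
    simp only [finiteSup, Finset.sup_eq_iSup]
  rw [hsSup, hcont _ (Set.range_nonempty _) hdir, iSup_range]
  refine iSup_le fun t => (inf_finset_sup_le h t Subtype.val).trans (Finset.sup_le fun c _ => ?_)
  exact le_biSup (a ⊓ ·) c.2

end CompleteLattice

theorem stmt_7_general {Q : Type*} [CompleteLattice Q]
    (e : Q)
    (hmeet_cont : ∀ (α : Q) (D : Set Q), D.Nonempty → DirectedOn (· ≤ ·) D →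
      α ⊓ sSup D = ⨆ d ∈ D, α ⊓ d)
    (he_approx : e ≤ sSup {β : Q | ∀ A : Set Q, e ≤ sSup A → ∃ c ∈ A, β ≤ c})
    (hnd : ∃ A : Set Q, ¬ e ⊓ sSup A ≤ ⨆ a ∈ A, e ⊓ a) :
    ∃ α β : Q, ¬ e ⊓ (α ⊔ β) ≤ (e ⊓ α) ⊔ (e ⊓ β) ∧ ¬ e ≤ α ⊔ β := by
  obtain ⟨A, hA⟩ := hnd
  have hbinary : ∃ α β : Q, ¬ e ⊓ (α ⊔ β) ≤ (e ⊓ α) ⊔ (e ⊓ β) := by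
    by_contra! hdistrib
    exact hA (inf_sSup_le_iSup_inf (hmeet_cont e) hdistrib A)
  obtain ⟨α, β, hαβ⟩ := hbinary
  exact ⟨α, β, hαβ, fun he => hαβ (inf_sup_le_of_le_sup he_approx he)⟩

/-- In a unitally nondistributive unital quantale with unit `e` whose
underlying lattice is meet-continuous, there are `α, β` with
`e ⊓ (α ⊔ β) ≰ (e ⊓ α) ⊔ (e ⊓ β)` and `e ≰ α ⊔ β`; in particular the underlying
lattice is strictly nondistributive. -/
theorem stmt_7 {Q : Type*} [CompleteLattice Q] (mul : Q → Q → Q)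
    (hassoc : ∀ a b c : Q, mul (mul a b) c = mul a (mul b c))
    (hsSup_left : ∀ (A : Set Q) (b : Q), mul (sSup A) b = ⨆ a ∈ A, mul a b)
    (hsSup_right : ∀ (A : Set Q) (b : Q), mul b (sSup A) = ⨆ a ∈ A, mul b a)
    (e : Q) (he_left : ∀ a : Q, mul e a = a) (he_right : ∀ a : Q, mul a e = a)
    (hmeet_cont : ∀ (α : Q) (D : Set Q), D.Nonempty → DirectedOn (· ≤ ·) D →
      α ⊓ sSup D = ⨆ d ∈ D, α ⊓ d)
    (he_approx : e ≤ sSup {β : Q | ∀ A : Set Q, e ≤ sSup A → ∃ c ∈ A, β ≤ c})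
    (hnd : ∃ A : Set Q, ¬ e ⊓ sSup A ≤ ⨆ a ∈ A, e ⊓ a) :
    ∃ α β : Q, ¬ e ⊓ (α ⊔ β) ≤ (e ⊓ α) ⊔ (e ⊓ β) ∧ ¬ e ≤ α ⊔ β :=
  stmt_7_general e hmeet_cont he_approx hnd
end

section
/- Let Q be a quantale on the diamond M3, with pairwise distinct elements ⊥, α, β, γ, ⊤ where α, β, γ are pairwise incomparable with pairwise joins ⊤ and pairwise meets ⊥, satisfying γ * a ⊔ a * γ ≤ a for all a ∈ Q, and assume γ * γ ≠ γ. Then γ * γ = ⊥, ⊤ * γ = ⊥ = γ * ⊤, and the multiplication is constant on {α, β, ⊤}: x * y = ⊤ * ⊤ for all x, y ∈ {α, β, ⊤}. -/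
/-!
Since `γ` absorbs downwards, `γ * γ ≤ γ`, and `γ` is an atom of `M3`, so `γ * γ = ⊥` once it differs
from `γ`. Then `⊤ * γ = (α ⊔ γ) * γ = α * γ ≤ α` and likewise `⊤ * γ ≤ β`, so `⊤ * γ ≤ α ⊓ β = ⊥`;
symmetrically `γ * ⊤ = ⊥`, hence `γ * y = ⊥` for every `y` by monotonicity. Each of `α, β, ⊤`
joins with `γ` to `⊤`, so by distributivity `x * y = ⊤ * y = ⊤ * ⊤` for `x, y` among them.
-/

section SupDistrib

variable {Q : Type*} [CompleteLattice Q] {mul : Q → Q → Q}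

theorem sup_mul_of_sSup_mul (hl : ∀ (A : Set Q) (b : Q), mul (sSup A) b = ⨆ a ∈ A, mul a b)
    (a b c : Q) : mul (a ⊔ b) c = mul a c ⊔ mul b c := by
  simpa [sSup_pair, iSup_or, iSup_sup_eq] using hl {a, b} c

theorem mul_sup_of_mul_sSup (hr : ∀ (A : Set Q) (b : Q), mul b (sSup A) = ⨆ a ∈ A, mul b a)
    (a b c : Q) : mul a (b ⊔ c) = mul a b ⊔ mul a c := by
  simpa [sSup_pair, iSup_or, iSup_sup_eq] using hr {b, c} a

theorem mul_le_mul_left_of_mul_sSup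
    (hr : ∀ (A : Set Q) (b : Q), mul b (sSup A) = ⨆ a ∈ A, mul b a) {b c : Q} (h : b ≤ c)
    (a : Q) : mul a b ≤ mul a c := by
  rw [← sup_eq_right.mpr h, mul_sup_of_mul_sSup hr]
  exact le_sup_left

theorem top_mul_eq_of_sup_eq_top (hl : ∀ (A : Set Q) (b : Q), mul (sSup A) b = ⨆ a ∈ A, mul a b)
    {a g c : Q} (hag : a ⊔ g = ⊤) (hg : mul g c = ⊥) : mul ⊤ c = mul a c := by
  rw [← hag, sup_mul_of_sSup_mul hl, hg, sup_bot_eq]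

theorem mul_top_eq_of_sup_eq_top (hr : ∀ (A : Set Q) (b : Q), mul b (sSup A) = ⨆ a ∈ A, mul b a)
    {a g c : Q} (hag : a ⊔ g = ⊤) (hg : mul c g = ⊥) : mul c ⊤ = mul c a := by
  rw [← hag, mul_sup_of_mul_sSup hr, hg, sup_bot_eq]

theorem top_mul_eq_bot_of_inf_eq_bot
    (hl : ∀ (A : Set Q) (b : Q), mul (sSup A) b = ⨆ a ∈ A, mul a b) {α β γ : Q}
    (hprop : ∀ a : Q, mul a γ ≤ a) (hγγ : mul γ γ = ⊥)
    (hαγ : α ⊔ γ = ⊤) (hβγ : β ⊔ γ = ⊤) (hαβ : α ⊓ β = ⊥) : mul ⊤ γ = ⊥ := by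
  refine le_bot_iff.mp (hαβ ▸ le_inf ?_ ?_)
  · exact top_mul_eq_of_sup_eq_top hl hαγ hγγ ▸ hprop α
  · exact top_mul_eq_of_sup_eq_top hl hβγ hγγ ▸ hprop β

theorem mul_top_eq_bot_of_inf_eq_bot
    (hr : ∀ (A : Set Q) (b : Q), mul b (sSup A) = ⨆ a ∈ A, mul b a) {α β γ : Q}
    (hprop : ∀ a : Q, mul γ a ≤ a) (hγγ : mul γ γ = ⊥)
    (hαγ : α ⊔ γ = ⊤) (hβγ : β ⊔ γ = ⊤) (hαβ : α ⊓ β = ⊥) : mul γ ⊤ = ⊥ := by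
  refine le_bot_iff.mp (hαβ ▸ le_inf ?_ ?_)
  · exact mul_top_eq_of_sup_eq_top hr hαγ hγγ ▸ hprop α
  · exact mul_top_eq_of_sup_eq_top hr hβγ hγγ ▸ hprop β

end SupDistrib

theorem stmt_18_general {Q : Type*} [CompleteLattice Q] (mul : Q → Q → Q)
    (hsSup_left : ∀ (A : Set Q) (b : Q), mul (sSup A) b = ⨆ a ∈ A, mul a b)
    (hsSup_right : ∀ (A : Set Q) (b : Q), mul b (sSup A) = ⨆ a ∈ A, mul b a)
    (α β γ : Q)
    (hcover : ∀ q : Q, q = ⊥ ∨ q = α ∨ q = β ∨ q = γ ∨ q = ⊤)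
    (hαγ : ¬ α ≤ γ ∧ ¬ γ ≤ α) (hβγ : ¬ β ≤ γ ∧ ¬ γ ≤ β)
    (hjαγ : α ⊔ γ = ⊤) (hjβγ : β ⊔ γ = ⊤)
    (hmαβ : α ⊓ β = ⊥)
    (hprop : ∀ a : Q, mul γ a ⊔ mul a γ ≤ a)
    (hnonunital : mul γ γ ≠ γ) :
    mul γ γ = ⊥ ∧ mul ⊤ γ = ⊥ ∧ mul γ ⊤ = ⊥ ∧
    (∀ x y : Q, (x = α ∨ x = β ∨ x = ⊤) → (y = α ∨ y = β ∨ y = ⊤) →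
      mul x y = mul ⊤ ⊤) := by
  have hγγ : mul γ γ = ⊥ := by
    have hle : mul γ γ ≤ γ := (sup_le_iff.mp (hprop γ)).1
    rcases hcover (mul γ γ) with h | h | h | h | h
    · exact h
    · exact (hαγ.1 (h ▸ hle)).elim
    · exact (hβγ.1 (h ▸ hle)).elim
    · exact (hnonunital h).elim
    · exact (hαγ.1 (le_top.trans (h ▸ hle))).elim
  have hTγ := top_mul_eq_bot_of_inf_eq_bot hsSup_left (fun a ↦ (sup_le_iff.mp (hprop a)).2)
    hγγ hjαγ hjβγ hmαβ
  have hγT := mul_top_eq_bot_of_inf_eq_bot hsSup_right (fun a ↦ (sup_le_iff.mp (hprop a)).1)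
    hγγ hjαγ hjβγ hmαβ
  have hsup_γ : ∀ x : Q, (x = α ∨ x = β ∨ x = ⊤) → x ⊔ γ = ⊤ := by
    rintro x (rfl | rfl | rfl)
    exacts [hjαγ, hjβγ, top_sup_eq γ]
  refine ⟨hγγ, hTγ, hγT, fun x y hx hy ↦ ?_⟩
  have hγy : mul γ y = ⊥ := le_bot_iff.mp (hγT ▸ mul_le_mul_left_of_mul_sSup hsSup_right le_top γ)
  calc mul x y = mul ⊤ y := (top_mul_eq_of_sup_eq_top hsSup_left (hsup_γ x hx) hγy).symm
    _ = mul ⊤ ⊤ := (mul_top_eq_of_sup_eq_top hsSup_right (hsup_γ y hy) hTγ).symm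

/-- Let `Q` be a quantale on the diamond `M3` satisfying
`γ * a ⊔ a * γ ≤ a` for all `a`, with `γ * γ ≠ γ`. Then `γ * γ = ⊥`,
`⊤ * γ = ⊥ = γ * ⊤`, and the multiplication is constant on `{α, β, ⊤}`. -/
theorem stmt_18 {Q : Type*} [CompleteLattice Q] (mul : Q → Q → Q)
    (hassoc : ∀ a b c : Q, mul (mul a b) c = mul a (mul b c))
    (hsSup_left : ∀ (A : Set Q) (b : Q), mul (sSup A) b = ⨆ a ∈ A, mul a b)
    (hsSup_right : ∀ (A : Set Q) (b : Q), mul b (sSup A) = ⨆ a ∈ A, mul b a)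
    (α β γ : Q)
    (hdistinct : ([⊥, α, β, γ, ⊤] : List Q).Pairwise (· ≠ ·))
    (hcover : ∀ q : Q, q = ⊥ ∨ q = α ∨ q = β ∨ q = γ ∨ q = ⊤)
    (hαβ : ¬ α ≤ β ∧ ¬ β ≤ α) (hαγ : ¬ α ≤ γ ∧ ¬ γ ≤ α) (hβγ : ¬ β ≤ γ ∧ ¬ γ ≤ β)
    (hjαβ : α ⊔ β = ⊤) (hjαγ : α ⊔ γ = ⊤) (hjβγ : β ⊔ γ = ⊤)
    (hmαβ : α ⊓ β = ⊥) (hmαγ : α ⊓ γ = ⊥) (hmβγ : β ⊓ γ = ⊥)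
    (hprop : ∀ a : Q, mul γ a ⊔ mul a γ ≤ a)
    (hnonunital : mul γ γ ≠ γ) :
    mul γ γ = ⊥ ∧ mul ⊤ γ = ⊥ ∧ mul γ ⊤ = ⊥ ∧
    (∀ x y : Q, (x = α ∨ x = β ∨ x = ⊤) → (y = α ∨ y = β ∨ y = ⊤) →
      mul x y = mul ⊤ ⊤) :=
  stmt_18_general mul hsSup_left hsSup_right α β γ hcover hαγ hβγ hjαγ hjβγ hmαβ hprop hnonunital
end
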